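/- For every integer N with N ≡ K (mod 2) and K ≤ N ≤ K·3^{m-1}, there exists p ∈ P_{L,K} with N_pil(p) = N; conversely, every p ∈ P_{L,K} satisfies N_pil(p) ≡ K (mod 2) and K ≤ N_pil(p) ≤ K·3^{m-1}. In other words, {N_pil(p) : p ∈ P_{L,K}} = {K, K+2, K+4, …, LK/3}. -/
import Mathlib


/-- A pilot assignment vector `p = (p_0, …, p_{m-1})` for `K` users per cell is
valid if `0 ≤ p_i ≤ K·3^i` for every `i` and `Σ_i p_i · 3^{-i} = K`. -/
def validPK {m : ℕ} (K : ℕ) (p : Fin m → ℤ) : Prop :=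
  (∀ i, 0 ≤ p i ∧ p i ≤ (K : ℤ) * 3 ^ (i : ℕ)) ∧
  (∑ i, (p i : ℝ) / 3 ^ (i : ℕ)) = (K : ℝ)

/-- The pilot length `N_pil(p) = Σ_i p_i`. -/
def Npil {m : ℕ} (p : Fin m → ℤ) : ℤ := ∑ i, p i

lemma exists_aux : ∀ (m K : ℕ) (N : ℤ), N ≡ (K : ℤ) [ZMOD 2] → (K : ℤ) ≤ N →
    N ≤ (K : ℤ) * 3 ^ m → ∃ p : Fin (m + 1) → ℤ, validPK K p ∧ Npil p = N := by
  intro m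
  induction m with
  | zero =>
    intro K N _ h1 h2
    simp only [pow_zero, mul_one] at h2
    have hNK : N = (K : ℤ) := le_antisymm h2 h1
    refine ⟨fun _ => (K : ℤ), ⟨fun i => ?_, ?_⟩, ?_⟩
    · exact ⟨Int.natCast_nonneg K, le_mul_of_one_le_right (Int.natCast_nonneg K) (one_le_pow₀ (by norm_num))⟩
    · simp
    · simp [Npil, hNK]
  | succ m ih =>
    intro K N hmod h1 h2
    by_cases hc : (3 * K : ℤ) ≤ N
    · -- a = 0, K' = 3K
      obtain ⟨p', hval, hN⟩ := ih (3 * K) N (by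
          have : ((3 * K : ℕ) : ℤ) % 2 = (K : ℤ) % 2 := by push_cast; omega
          exact hmod.trans (by unfold Int.ModEq; omega))
        (by push_cast; exact hc)
        (by push_cast at h2 ⊢; calc N ≤ (K:ℤ) * 3 ^ (m+1) := h2
              _ = 3 * (K:ℤ) * 3 ^ m := by ring)
      refine ⟨Fin.cons 0 p', ⟨?_, ?_⟩, ?_⟩
      · intro i
        refine Fin.cases ?_ ?_ i
        · simp only [Fin.cons_zero]
          exact ⟨le_rfl, by positivity⟩
        · intro j
          simp only [Fin.cons_succ]
          obtain ⟨hb1, hb2⟩ := hval.1 j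
          refine ⟨hb1, hb2.trans ?_⟩
          push_cast
          have : ((j : ℕ) : ℕ) = (j : ℕ) := rfl
          rw [Fin.val_succ, pow_succ]
          push_cast
          ring_nf
          nlinarith [pow_pos (by norm_num : (0:ℤ) < 3) (j:ℕ), (Int.natCast_nonneg K : (0:ℤ) ≤ K)]
      · have hs := hval.2
        rw [Fin.sum_univ_succ]
        simp only [Fin.cons_zero, Fin.cons_succ, Fin.val_succ, Int.cast_zero, pow_succ']
        push_cast
        have : ∑ i : Fin (m+1), (p' i : ℝ) / (3 * 3 ^ (i:ℕ)) = (∑ i : Fin (m+1), (p' i : ℝ) / 3 ^ (i:ℕ)) / 3 := by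
          rw [Finset.sum_div]
          congr 1; ext i; rw [mul_comm, ← div_div]
        rw [this, hs]
        push_cast
        simp [Fin.val_zero]
      · unfold Npil at hN ⊢
        rw [Fin.sum_univ_succ]
        simp [Fin.cons_zero, Fin.cons_succ, hN]
    · -- N < 3K : set b = (N - K)/2
      push_neg at hc
      have hpar : (2 : ℤ) ∣ N - K := by
        have := hmod; unfold Int.ModEq at this; omega
      obtain ⟨b, hb⟩ := hpar
      have hb0 : 0 ≤ b := by omega
      have hbK : b ≤ (K : ℤ) := by omega
      obtain ⟨bn, rfl⟩ := Int.eq_ofNat_of_zero_le hb0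
      obtain ⟨p', hval, hN⟩ := ih (3 * bn) ((3 * bn : ℕ) : ℤ) (Int.ModEq.refl _) le_rfl
        (by push_cast; nlinarith [pow_pos (by norm_num : (0:ℤ) < 3) m, (Int.natCast_nonneg bn : (0:ℤ) ≤ bn)])
      refine ⟨Fin.cons ((K : ℤ) - bn) p', ⟨?_, ?_⟩, ?_⟩
      · intro i
        refine Fin.cases ?_ ?_ i
        · simp [Fin.cons_zero]; omega
        · intro j
          simp only [Fin.cons_succ]
          obtain ⟨hb1, hb2⟩ := hval.1 j
          refine ⟨hb1, hb2.trans ?_⟩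
          rw [Fin.val_succ, pow_succ]
          push_cast
          nlinarith [pow_pos (by norm_num : (0:ℤ) < 3) (j:ℕ)]
      · have hs := hval.2
        rw [Fin.sum_univ_succ]
        simp only [Fin.cons_zero, Fin.cons_succ, Fin.val_succ]
        have h3 : ∑ i : Fin (m+1), ((p' i : ℝ)) / 3 ^ ((i:ℕ)+1) = (∑ i : Fin (m+1), (p' i : ℝ) / 3 ^ (i:ℕ)) / 3 := by
          rw [Finset.sum_div]
          congr 1; ext i; rw [pow_succ, ← div_div]
        rw [h3, hs]
        push_cast
        simp [Fin.val_zero]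
      · unfold Npil at hN ⊢
        rw [Fin.sum_univ_succ]
        simp only [Fin.cons_zero, Fin.cons_succ, hN]
        omega

/-- Generalized Lemma 1: the set of achievable pilot lengths for `K` users per
cell is exactly `{K, K+2, K+4, …, K·3^{m-1}}`. -/
theorem pilot_length_range_multiuser (m : ℕ) (hm : 2 ≤ m) (K : ℕ) (hK : 1 ≤ K) :
    {N : ℤ | ∃ p : Fin m → ℤ, validPK K p ∧ Npil p = N} =
    {N : ℤ | N ≡ (K : ℤ) [ZMOD 2] ∧ (K : ℤ) ≤ N ∧ N ≤ (K : ℤ) * 3 ^ (m - 1)} := by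
  obtain ⟨m', rfl⟩ : ∃ m', m = m' + 1 := ⟨m - 1, by omega⟩
  ext N
  simp only [Set.mem_setOf_eq, Nat.add_sub_cancel]
  constructor
  · rintro ⟨p, ⟨hbd, hsum⟩, rfl⟩
    -- integer identity
    have key : (∑ i : Fin (m'+1), p i * 3 ^ (m' - (i:ℕ))) = (K : ℤ) * 3 ^ m' := by
      have : ((∑ i : Fin (m'+1), p i * 3 ^ (m' - (i:ℕ))) : ℝ) = ((K : ℤ) * 3 ^ m' : ℤ) := by
        push_cast
        rw [← hsum, Finset.sum_mul]
        apply Finset.sum_congr rfl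
        intro i _
        have hi : (i : ℕ) ≤ m' := Nat.lt_succ_iff.mp i.isLt
        rw [div_mul_eq_mul_div, eq_div_iff (by positivity)]
        rw [mul_assoc, ← pow_add]
        congr 2
        omega
      exact_mod_cast this
    constructor
    · -- parity
      show Npil p % 2 = (K : ℤ) % 2
      have hterm : ∀ i : Fin (m'+1), p i * 3 ^ (m' - (i:ℕ)) % 2 = p i % 2 := by
        intro i
        have h3 : (3:ℤ) ^ (m' - (i:ℕ)) % 2 = 1 := by
          have h := Int.ModEq.pow (m' - (i:ℕ)) (show (3:ℤ) ≡ 1 [ZMOD 2] by decide)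
          simpa [Int.ModEq] using h
        rw [Int.mul_emod, h3, mul_one, Int.emod_emod_of_dvd _ dvd_rfl]
      have h3m : (3:ℤ) ^ m' % 2 = 1 := by
        have h := Int.ModEq.pow m' (show (3:ℤ) ≡ 1 [ZMOD 2] by decide)
        simpa [Int.ModEq] using h
      unfold Npil
      calc (∑ i, p i) % 2 = (∑ i, p i % 2) % 2 := Finset.sum_int_mod _ _ _
        _ = (∑ i : Fin (m'+1), p i * 3 ^ (m' - (i:ℕ)) % 2) % 2 := by
            congr 1; exact Finset.sum_congr rfl fun i _ => (hterm i).symm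
        _ = (∑ i : Fin (m'+1), p i * 3 ^ (m' - (i:ℕ))) % 2 := (Finset.sum_int_mod _ _ _).symm
        _ = ((K:ℤ) * 3 ^ m') % 2 := by rw [key]
        _ = (K:ℤ) % 2 := by rw [Int.mul_emod, h3m, mul_one, Int.emod_emod_of_dvd _ dvd_rfl]
    constructor
    · -- K ≤ N
      have : (K : ℝ) ≤ ((Npil p : ℤ) : ℝ) := by
        rw [← hsum]
        unfold Npil
        push_cast
        apply Finset.sum_le_sum
        intro i _
        obtain ⟨h1, _⟩ := hbd i
        rw [div_le_iff₀ (by positivity)]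
        have : (1:ℝ) ≤ 3 ^ (i:ℕ) := one_le_pow₀ (by norm_num)
        nlinarith [(by exact_mod_cast h1 : (0:ℝ) ≤ (p i : ℝ))]
      exact_mod_cast this
    · -- N ≤ K 3^m'
      rw [← key]
      unfold Npil
      apply Finset.sum_le_sum
      intro i _
      obtain ⟨h1, _⟩ := hbd i
      nlinarith [one_le_pow₀ (by norm_num : (1:ℤ) ≤ 3) (n := m' - (i:ℕ))]
  · rintro ⟨hmod, h1, h2⟩
    exact exists_aux m' K N hmod h1 h2
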